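/- arXiv:1404.3181 — 3 statements merged into one kernel-verified Lean document; each statement's English description precedes it below -/
import Mathlib

section
/- Let B be a blanket set for target t with respect to source s, i.e., every path from s to t passes through B. For a random walk RW(s,L) of geometric length L ~ Geom(α), let H_B denote the first node of B hit by the walk (H_B = ⊥ if B is never hit). Then π_s(t) = ∑_{w ∈ B} P[H_B = w] · π_w(t). -/
open scoped BigOperators

variable {V : Type*} [Fintype V] [DecidableEq V]

/-- Out-degree of `u` in the directed graph with adjacency predicate `adj`. -/
def outDeg (adj : V → V → Bool) (u : V) : ℕ :=
  (Finset.univ.filter (fun v => adj u v)).card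

/-- The random-walk transition matrix `W`: `W x y = 1 / d_out(x)` if `(x,y)` is an edge,
and `0` otherwise. -/
noncomputable def walkMatrix (adj : V → V → Bool) : Matrix V V ℝ :=
  Matrix.of fun x y => if adj x y then (1 : ℝ) / outDeg adj x else 0

/-!
Let `M` be the walk matrix `W` with the rows of `B` set to zero, i.e. the walk stopped on
entering `B`. Splitting a walk of length `n` at its first visit to `B` gives the matrix identity
`W ^ n = M ^ n + ∑ i < n, M ^ i * (W - M) * W ^ (n - 1 - i)`. Since `W - M` lives on the rows
of `B`, its `(s, t)` entry is `∑ i ≤ n, ∑ w ∈ B, M ^ i (s, w) * W ^ (n - i) (w, t)`: the term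
`M ^ n (s, t)` either is such a summand (`t ∈ B`) or vanishes by the blanket property.
Weighting by `(1 - α) ^ n` and summing over `n` turns the right-hand side into Cauchy products,
which converge absolutely because all powers of substochastic matrices have entries in `[0, 1]`.
-/

open Finset

theorem add_pow_eq_pow_add_sum {R : Type*} [Semiring R] (a d : R) (k : ℕ) :
    (a + d) ^ k = a ^ k + ∑ i ∈ range k, a ^ i * d * (a + d) ^ (k - 1 - i) := by
  induction k with
  | zero => simp
  | succ k ih =>
    rw [pow_succ', add_mul]
    nth_rw 1 [ih]
    rw [mul_add, mul_sum, sum_range_succ']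
    simp only [← mul_assoc, ← pow_succ', pow_zero, one_mul, Nat.add_sub_cancel, Nat.sub_zero,
      Nat.sub_sub, Nat.add_comm 1]
    abel

namespace Matrix

variable {n R : Type*} [Fintype n]

def IsSubstochastic [Semiring R] [PartialOrder R] (A : Matrix n n R) : Prop :=
  (∀ i j, 0 ≤ A i j) ∧ ∀ i, ∑ j, A i j ≤ 1

namespace IsSubstochastic

variable [Semiring R] [PartialOrder R] [IsOrderedRing R] {A C : Matrix n n R}

lemma mul (hA : A.IsSubstochastic) (hC : C.IsSubstochastic) : (A * C).IsSubstochastic := by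
  refine ⟨fun i j => sum_nonneg fun k _ => mul_nonneg (hA.1 i k) (hC.1 k j), fun i => ?_⟩
  calc ∑ j, (A * C) i j = ∑ k, A i k * ∑ j, C k j := by
        simp only [mul_apply, mul_sum]
        exact sum_comm
    _ ≤ ∑ k, A i k * 1 := sum_le_sum fun k _ => mul_le_mul_of_nonneg_left (hC.2 k) (hA.1 i k)
    _ ≤ 1 := by simpa using hA.2 i

lemma apply_le_one (hA : A.IsSubstochastic) (i j : n) : A i j ≤ 1 :=
  (single_le_sum (fun k _ => hA.1 i k) (mem_univ j)).trans (hA.2 i)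

lemma of_le (hA : A.IsSubstochastic) (h0 : ∀ i j, 0 ≤ C i j) (hle : ∀ i j, C i j ≤ A i j) :
    C.IsSubstochastic :=
  ⟨h0, fun i => (sum_le_sum fun j _ => hle i j).trans (hA.2 i)⟩

variable [DecidableEq n]

lemma one : (1 : Matrix n n R).IsSubstochastic := by
  refine ⟨fun i j => ?_, fun i => ?_⟩
  · rw [one_apply]
    split_ifs <;> simp
  · simp [one_apply]

lemma pow (hA : A.IsSubstochastic) (k : ℕ) : (A ^ k).IsSubstochastic := by
  induction k with
  | zero => simpa using one
  | succ k ih => simpa [pow_succ] using ih.mul hA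

lemma summable_norm_pow_mul_pow_apply {A : Matrix n n ℝ} (hA : A.IsSubstochastic) {r : ℝ}
    (hr : |r| < 1) (i j : n) : Summable fun k => ‖r ^ k * (A ^ k) i j‖ := by
  refine .of_nonneg_of_le (fun k => norm_nonneg _) (fun k => ?_)
    (summable_geometric_of_lt_one (abs_nonneg r) hr)
  have hentry := (hA.pow k).1 i j
  rw [norm_mul, norm_pow, Real.norm_eq_abs, Real.norm_eq_abs, abs_of_nonneg hentry]
  exact mul_le_of_le_one_right (by positivity) ((hA.pow k).apply_le_one i j)

end IsSubstochastic

variable [DecidableEq n]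

def zeroRows [Zero R] (B : Finset n) (A : Matrix n n R) : Matrix n n R :=
  of fun i j => if i ∈ B then 0 else A i j

lemma IsSubstochastic.zeroRows [Semiring R] [PartialOrder R] [IsOrderedRing R]
    {A : Matrix n n R} (hA : A.IsSubstochastic) (B : Finset n) : (A.zeroRows B).IsSubstochastic :=
  hA.of_le
    (fun i j => by simp only [Matrix.zeroRows, of_apply]; split_ifs; exacts [le_rfl, hA.1 i j])
    (fun i j => by simp only [Matrix.zeroRows, of_apply]; split_ifs; exacts [hA.1 i j, le_rfl])

lemma sub_zeroRows_mul_apply [Ring R] (B : Finset n) (A X : Matrix n n R) (i j : n) :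
    ((A - A.zeroRows B) * X) i j = if i ∈ B then (A * X) i j else 0 := by
  by_cases hi : i ∈ B <;> simp [mul_apply, zeroRows, hi]

/-- First-passage decomposition of `A ^ k` through `B`. -/
theorem pow_apply_eq_sum_zeroRows_pow_mul_pow [Ring R] (A : Matrix n n R) {B : Finset n}
    {s t : n} (hblanket : t ∉ B → ∀ i, (A.zeroRows B ^ i) s t = 0) (k : ℕ) :
    (A ^ k) s t = ∑ i ∈ range (k + 1), ∑ w ∈ B, (A.zeroRows B ^ i) s w * (A ^ (k - i)) w t := by
  have hpassage : ∀ i ∈ range k, (A.zeroRows B ^ i * (A - A.zeroRows B) * A ^ (k - 1 - i)) s t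
      = ∑ w ∈ B, (A.zeroRows B ^ i) s w * (A ^ (k - i)) w t := fun i hi => by
    have hexp : k - i = k - 1 - i + 1 := by have := mem_range.1 hi; omega
    rw [mul_assoc, mul_apply, hexp, pow_succ']
    simp only [sub_zeroRows_mul_apply, mul_ite, mul_zero, sum_ite_mem, univ_inter]
  have hstay : (A.zeroRows B ^ k) s t = ∑ w ∈ B, (A.zeroRows B ^ k) s w * (A ^ (k - k)) w t := by
    by_cases ht : t ∈ B <;> simp [one_apply, ht, hblanket]
  have hsplit := congrFun₂ (add_pow_eq_pow_add_sum (A.zeroRows B) (A - A.zeroRows B) k) s t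
  rw [add_sub_cancel] at hsplit
  rw [hsplit, add_apply, sum_apply, sum_congr rfl hpassage, sum_range_succ, hstay, add_comm]

theorem tsum_pow_mul_pow_apply_eq_sum_zeroRows {A : Matrix n n ℝ} (hA : A.IsSubstochastic)
    {B : Finset n} {s t : n} (hblanket : t ∉ B → ∀ i, (A.zeroRows B ^ i) s t = 0)
    {r : ℝ} (hr : |r| < 1) :
    ∑' k, r ^ k * (A ^ k) s t
      = ∑ w ∈ B, (∑' i, r ^ i * (A.zeroRows B ^ i) s w) * ∑' j, r ^ j * (A ^ j) w t := by
  set M := A.zeroRows B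
  have hM := hA.zeroRows B
  have hterm : ∀ k, r ^ k * (A ^ k) s t = ∑ w ∈ B, ∑ i ∈ range (k + 1),
      r ^ i * (M ^ i) s w * (r ^ (k - i) * (A ^ (k - i)) w t) := fun k => by
    rw [pow_apply_eq_sum_zeroRows_pow_mul_pow A hblanket k]
    simp_rw [mul_sum]
    rw [sum_comm]
    refine sum_congr rfl fun w _ => sum_congr rfl fun i hi => ?_
    rw [← pow_mul_pow_sub r (Nat.le_of_lt_succ (mem_range.1 hi))]
    ring
  rw [tsum_congr hterm, Summable.tsum_finsetSum fun w _ =>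
    (summable_norm_sum_mul_range_of_summable_norm (hM.summable_norm_pow_mul_pow_apply hr s w)
      (hA.summable_norm_pow_mul_pow_apply hr w t)).of_norm]
  exact sum_congr rfl fun w _ => (tsum_mul_tsum_eq_tsum_sum_range_of_summable_norm
    (hM.summable_norm_pow_mul_pow_apply hr s w) (hA.summable_norm_pow_mul_pow_apply hr w t)).symm

end Matrix

lemma isSubstochastic_walkMatrix {ι : Type*} [Fintype ι] (adj : ι → ι → Bool) :
    (walkMatrix adj).IsSubstochastic := by
  refine ⟨fun x y => ?_, fun x => ?_⟩
  · simp only [walkMatrix, Matrix.of_apply]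
    split_ifs <;> positivity
  · simp only [walkMatrix, Matrix.of_apply, sum_ite, sum_const_zero, add_zero, sum_const,
      nsmul_eq_mul, mul_one_div]
    exact div_self_le_one _

/-- `∑' i, (1 - α) ^ i * (M ^ i) s w` is the probability `P[H_B = w]` of the paper. -/
theorem ppr_blanket_decomposition_general
    (adj : V → V → Bool)
    (α : ℝ) (hα₀ : 0 < α) (hα₁ : α < 1)
    (B : Finset V) (s t : V)
    (M : Matrix V V ℝ)
    (hM : M = Matrix.of fun x y => if x ∈ B then 0 else walkMatrix adj x y)
    (hblanket : t ∉ B → ∀ i : ℕ, (M ^ i) s t = 0) :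
    (∑' i : ℕ, α * (1 - α) ^ i * ((walkMatrix adj) ^ i) s t)
      = ∑ w ∈ B,
          (∑' i : ℕ, (1 - α) ^ i * (M ^ i) s w)
            * (∑' j : ℕ, α * (1 - α) ^ j * ((walkMatrix adj) ^ j) w t) := by
  obtain rfl : M = (walkMatrix adj).zeroRows B := hM
  have hr : |1 - α| < 1 := abs_lt.2 ⟨by linarith, by linarith⟩
  simp_rw [mul_assoc α, tsum_mul_left, mul_left_comm _ α, ← mul_sum,
    Matrix.tsum_pow_mul_pow_apply_eq_sum_zeroRows (isSubstochastic_walkMatrix adj) hblanket hr]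

/-- blanket-set decomposition.  `B` is a blanket set for `t` w.r.t. `s`:
every path from `s` to `t` passes through `B` (encoded: if `t ∉ B` then there is no
`B`-avoiding walk from `s` to `t`, where `M` is the walk matrix with the rows of `B`
zeroed out, so that `(M^i) s w` is the probability that the walk first hits `B` at node
`w ∈ B` at step `i`).  Then, with `π_s(t) = P[V_L = t]` for a geometric-length walk,
`π_s(t) = ∑_{w ∈ B} P[H_B = w] · π_w(t)`, where
`P[H_B = w] = ∑_{i≥0} (1-α)^i (M^i)(s,w)`. -/
theorem ppr_blanket_decomposition
    (adj : V → V → Bool) (hdeg : ∀ u : V, 0 < outDeg adj u)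
    (α : ℝ) (hα₀ : 0 < α) (hα₁ : α < 1)
    (B : Finset V) (s t : V) (hs : s ∉ B)
    (M : Matrix V V ℝ)
    (hM : M = Matrix.of fun x y => if x ∈ B then 0 else walkMatrix adj x y)
    (hblanket : t ∉ B → ∀ i : ℕ, (M ^ i) s t = 0) :
    (∑' i : ℕ, α * (1 - α) ^ i * ((walkMatrix adj) ^ i) s t)
      = ∑ w ∈ B,
          (∑' i : ℕ, (1 - α) ^ i * (M ^ i) s w)
            * (∑' j : ℕ, α * (1 - α) ^ j * ((walkMatrix adj) ^ j) w t) :=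
  ppr_blanket_decomposition_general adj α hα₀ hα₁ B s t M hM hblanket
end

section
/- If ε_r < α and s ∉ T_t(ε_r), then the probability that a random walk RW(s,L) of geometric length L ~ Geom(α) hits the frontier set F_t(ε_r) is at least π_s(t)/ε_r. -/
open scoped BigOperators

variable {V : Type*} [Fintype V] [DecidableEq V]

/-- Personalized PageRank, characterized as the probability that a geometric-length
(`L ~ Geom(α)`) random walk from `a` ends at `b`. -/
noncomputable def pprSeries (adj : V → V → Bool) (α : ℝ) (a b : V) : ℝ :=
  ∑' i : ℕ, α * (1 - α) ^ i * ((walkMatrix adj) ^ i) a b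

/-!
Write `P = (1 - α) W` and `Q = (1 - α) M`, where `M` is `W` with the rows of `F` set to zero.
The resolvent identity `(1 - P)⁻¹ = (1 - Q)⁻¹ + (1 - Q)⁻¹ (P - Q) (1 - P)⁻¹`, read at the entry
`(s, t)`, is the blanket-set decomposition `π_s(t) = ∑_{w ∈ F} h(s, w) π_w(t)` with
`h(s, w) = ((1 - Q)⁻¹)_{s w}` the probability of hitting `F` first at `w`, provided
`((1 - Q)⁻¹)_{s t} = 0`. That holds because a walk that has not yet hit `F` never leaves
`{x | π_x(t) ≤ ε_r}`, whereas `π_t(t) ≥ α > ε_r`. Bounding `π_w(t) ≤ ε_r` on `F` gives the claim.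
-/

-- The max-row-sum norm, under which a substochastic matrix has norm at most `1`.
attribute [local instance] Matrix.linftyOpSeminormedAddCommGroup Matrix.linftyOpNormedRing
  Matrix.linftyOpNormedAlgebra

section NormedRing

variable {R : Type*} [NormedRing R] [HasSummableGeomSeries R]

theorem tsum_geometric_eq_add_mul_sub_mul {P Q : R} (hP : ‖P‖ < 1) (hQ : ‖Q‖ < 1) :
    ∑' k, P ^ k = ∑' k, Q ^ k + (∑' k, Q ^ k) * (P - Q) * ∑' k, P ^ k :=
  calc ∑' k, P ^ k = (∑' k, Q ^ k) * (1 - Q) * ∑' k, P ^ k := by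
        rw [geom_series_mul_neg Q hQ, one_mul]
    _ = (∑' k, Q ^ k) * ((1 - P) * ∑' k, P ^ k) + (∑' k, Q ^ k) * (P - Q) * ∑' k, P ^ k := by
        noncomm_ring
    _ = _ := by rw [mul_neg_geom_series P hP, mul_one]

theorem mul_tsum_geometric {P : R} (hP : ‖P‖ < 1) : P * ∑' k, P ^ k = ∑' k, P ^ k - 1 :=
  (geom_series_mul_shift P hP).trans (geom_series_succ P hP)

end NormedRing

namespace Matrix

theorem hasSum_apply {ι m n R : Type*} [AddCommMonoid R] [TopologicalSpace R]
    {f : ι → Matrix m n R} {A : Matrix m n R} (hf : HasSum f A) (x : m) (y : n) :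
    HasSum (fun k => f k x y) (A x y) :=
  Pi.hasSum.mp (Pi.hasSum.mp hf x) y

theorem linfty_opNorm_le_one {m n α : Type*} [Fintype m] [Fintype n] [SeminormedAddCommGroup α]
    {A : Matrix m n α} (hA : ∀ x, ∑ y, ‖A x y‖ ≤ 1) : ‖A‖ ≤ 1 := by
  rw [linfty_opNorm_def, ← NNReal.coe_one, NNReal.coe_le_coe]
  refine Finset.sup_le fun x _ => ?_
  rw [← NNReal.coe_le_coe]
  push_cast
  exact hA x

variable {n : Type*} [Fintype n] [DecidableEq n]

theorem pow_apply_eq_zero_of_forall_mem {R : Type*} [Semiring R] {A : Matrix n n R} {S : Set n}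
    (hS : ∀ x ∈ S, ∀ z, A x z ≠ 0 → z ∈ S) {x y : n} (hx : x ∈ S) (hy : y ∉ S) (k : ℕ) :
    (A ^ k) x y = 0 := by
  induction k generalizing x with
  | zero => exact one_apply_ne (ne_of_mem_of_not_mem hx hy)
  | succ k ih =>
    rw [pow_succ', mul_apply]
    refine Finset.sum_eq_zero fun z _ => ?_
    by_cases hxz : A x z = 0
    · rw [hxz, zero_mul]
    · rw [ih (hS x hx z hxz), mul_zero]

theorem tsum_pow_apply_eq_first_hit {P Q : Matrix n n ℝ} {F : Finset n}
    (hQ : ∀ x y, Q x y = if x ∈ F then 0 else P x y) (hP1 : ‖P‖ < 1) (hQ1 : ‖Q‖ < 1) (s t : n) :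
    (∑' k, P ^ k) s t = (∑' k, Q ^ k) s t +
      ∑ w ∈ F, (∑' k, Q ^ k) s w * ((∑' k, P ^ k) w t - (1 : Matrix n n ℝ) w t) := by
  set D : Matrix n n ℝ := diagonal fun x => if x ∈ F then 1 else 0
  have hPQ : P - Q = D * P := by
    ext x y
    by_cases hx : x ∈ F <;> simp [D, hQ, hx]
  have h := tsum_geometric_eq_add_mul_sub_mul hP1 hQ1
  rw [hPQ, mul_assoc, mul_assoc, mul_tsum_geometric hP1, ← mul_assoc] at h
  have hst := ext_iff.mpr h s t
  rw [add_apply, mul_apply] at hst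
  simp only [D, mul_diagonal, mul_ite, mul_one, mul_zero, ite_mul, zero_mul, sub_apply,
    Finset.sum_ite_mem, Finset.univ_inter] at hst
  exact hst

theorem tsum_smul_pow_apply {c : ℝ} {A : Matrix n n ℝ} (h : ‖c • A‖ < 1) (x y : n) :
    (∑' k, (c • A) ^ k) x y = ∑' k, c ^ k * (A ^ k) x y := by
  refine (hasSum_apply (summable_geometric_of_norm_lt_one h).hasSum x y).tsum_eq.symm.trans ?_
  simp only [smul_pow, smul_apply, smul_eq_mul]

theorem one_apply_le_tsum_pow_apply {A : Matrix n n ℝ} (hA0 : ∀ x y, 0 ≤ A x y) (hA : ‖A‖ < 1)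
    (x y : n) : (1 : Matrix n n ℝ) x y ≤ (∑' k, A ^ k) x y := by
  have hxy := hasSum_apply (summable_geometric_of_norm_lt_one hA).hasSum x y
  refine le_of_le_of_eq ?_ hxy.tsum_eq
  rw [hxy.summable.tsum_eq_zero_add, pow_zero]
  exact le_add_of_nonneg_right (tsum_nonneg fun k => pow_apply_nonneg hA0 _ x y)

end Matrix

open Matrix

omit [DecidableEq V] in
theorem walkMatrix_nonneg (adj : V → V → Bool) (x y : V) : 0 ≤ walkMatrix adj x y := by
  simp only [walkMatrix, of_apply]
  split <;> positivity

omit [DecidableEq V] in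
theorem sum_walkMatrix_le_one (adj : V → V → Bool) (x : V) : ∑ y, walkMatrix adj x y ≤ 1 := by
  simp only [walkMatrix, of_apply, Finset.sum_ite, Finset.sum_const_zero, add_zero,
    Finset.sum_const, nsmul_eq_mul, mul_one_div]
  exact div_self_le_one _

theorem norm_smul_lt_one_of_le_walkMatrix {adj : V → V → Bool} {A : Matrix V V ℝ}
    (hA0 : ∀ x y, 0 ≤ A x y) (hA : ∀ x y, A x y ≤ walkMatrix adj x y) {c : ℝ} (hc0 : 0 ≤ c)
    (hc1 : c < 1) :
    ‖c • A‖ < 1 :=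
  calc ‖c • A‖ ≤ ‖c‖ * ‖A‖ := norm_smul_le c A
    _ ≤ c * 1 := by
      rw [Real.norm_of_nonneg hc0]
      refine mul_le_mul_of_nonneg_left (linfty_opNorm_le_one fun x => ?_) hc0
      calc ∑ y, ‖A x y‖ = ∑ y, A x y :=
            Finset.sum_congr rfl fun y _ => Real.norm_of_nonneg (hA0 x y)
        _ ≤ ∑ y, walkMatrix adj x y := Finset.sum_le_sum fun y _ => hA x y
        _ ≤ 1 := sum_walkMatrix_le_one adj x
    _ < 1 := by rwa [mul_one]

theorem pprSeries_eq_mul_tsum_pow_apply (adj : V → V → Bool) {α : ℝ}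
    (h : ‖(1 - α) • walkMatrix adj‖ < 1) (a b : V) :
    pprSeries adj α a b = α * (∑' k, ((1 - α) • walkMatrix adj) ^ k) a b := by
  rw [tsum_smul_pow_apply h, ← tsum_mul_left]
  simp only [pprSeries, mul_assoc]

theorem le_pprSeries_self (adj : V → V → Bool) {α : ℝ} (hα₀ : 0 < α) (hα₁ : α < 1) (t : V) :
    α ≤ pprSeries adj α t t := by
  have hc0 : 0 ≤ 1 - α := sub_nonneg.mpr hα₁.le
  have hW1 := norm_smul_lt_one_of_le_walkMatrix (walkMatrix_nonneg adj) (fun x y => le_rfl) hc0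
    (sub_lt_self 1 hα₀)
  have hGtt := one_apply_le_tsum_pow_apply
    (fun x y => mul_nonneg hc0 (walkMatrix_nonneg adj x y)) hW1 t t
  rw [one_apply_eq] at hGtt
  rw [pprSeries_eq_mul_tsum_pow_apply adj hW1]
  exact le_mul_of_one_le_right hα₀.le hGtt

noncomputable def killedWalkMatrix (adj : V → V → Bool) (F : Finset V) : Matrix V V ℝ :=
  of fun x y => if x ∈ F then 0 else walkMatrix adj x y

theorem killedWalkMatrix_nonneg (adj : V → V → Bool) (F : Finset V) (x y : V) :
    0 ≤ killedWalkMatrix adj F x y := by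
  rw [killedWalkMatrix, of_apply]
  split_ifs
  exacts [le_rfl, walkMatrix_nonneg adj x y]

theorem killedWalkMatrix_le_walkMatrix (adj : V → V → Bool) (F : Finset V) (x y : V) :
    killedWalkMatrix adj F x y ≤ walkMatrix adj x y := by
  rw [killedWalkMatrix, of_apply]
  split_ifs
  exacts [walkMatrix_nonneg adj x y, le_rfl]

theorem pprSeries_eq_sum_mul_pprSeries (adj : V → V → Bool) {α : ℝ} (hα₀ : 0 < α)
    (hα₁ : α < 1) {F : Finset V} {s t : V} (hst : ∀ k, (killedWalkMatrix adj F ^ k) s t = 0)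
    (htF : t ∉ F) :
    pprSeries adj α s t = ∑ w ∈ F,
      (∑' i : ℕ, (1 - α) ^ i * (killedWalkMatrix adj F ^ i) s w) * pprSeries adj α w t := by
  have hc0 : 0 ≤ 1 - α := sub_nonneg.mpr hα₁.le
  have hc1 : 1 - α < 1 := sub_lt_self 1 hα₀
  have hW1 := norm_smul_lt_one_of_le_walkMatrix (walkMatrix_nonneg adj) (fun x y => le_rfl) hc0 hc1
  have hM1 := norm_smul_lt_one_of_le_walkMatrix (killedWalkMatrix_nonneg adj F)
    (killedWalkMatrix_le_walkMatrix adj F) hc0 hc1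
  have hfirst := tsum_pow_apply_eq_first_hit (F := F) (fun x y => by
    rw [killedWalkMatrix]; split_ifs with hx <;> simp [hx]) hW1 hM1 s t
  have hGst : (∑' k, ((1 - α) • killedWalkMatrix adj F) ^ k) s t = 0 := by
    simp [tsum_smul_pow_apply hM1, hst]
  rw [pprSeries_eq_mul_tsum_pow_apply adj hW1, hfirst, hGst, zero_add, Finset.mul_sum]
  refine Finset.sum_congr rfl fun w hw => ?_
  rw [one_apply_ne (ne_of_mem_of_not_mem hw htF), sub_zero,
    pprSeries_eq_mul_tsum_pow_apply adj hW1, tsum_smul_pow_apply hM1]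
  ring

theorem killedWalkMatrix_pow_apply_eq_zero {adj : V → V → Bool} {α εr : ℝ} {t : V} {F : Finset V}
    (hF : F = Finset.univ.filter (fun w =>
        pprSeries adj α w t ≤ εr ∧ ∃ v : V, adj w v ∧ εr < pprSeries adj α v t))
    (ht : εr < pprSeries adj α t t) {s : V} (hs : pprSeries adj α s t ≤ εr) (k : ℕ) :
    (killedWalkMatrix adj F ^ k) s t = 0 := by
  refine pow_apply_eq_zero_of_forall_mem (S := {x | pprSeries adj α x t ≤ εr})
    (fun x hx z hxz => ?_) hs ht.not_ge k
  rw [killedWalkMatrix, of_apply] at hxz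
  split_ifs at hxz with hxF
  · exact absurd rfl hxz
  by_contra hz
  refine hxF (hF ▸ Finset.mem_filter.mpr ⟨Finset.mem_univ x, hx, z, ?_, lt_of_not_ge hz⟩)
  by_contra hadj
  simp [walkMatrix, hadj] at hxz

/-- `(1 - α) ^ i * (M ^ i) s w` is the probability that the walk from `s` has length at least `i`
and first hits `F` at `w` at step `i`. -/
theorem walk_hits_frontier_with_prob_general
    (adj : V → V → Bool)
    (α : ℝ) (hα₀ : 0 < α) (hα₁ : α < 1)
    (εr : ℝ) (hεr₀ : 0 < εr) (hεrα : εr < α)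
    (s t : V) (hs : pprSeries adj α s t ≤ εr)
    (F : Finset V)
    (hF : F = Finset.univ.filter (fun w =>
        pprSeries adj α w t ≤ εr ∧ ∃ v : V, adj w v ∧ εr < pprSeries adj α v t))
    (M : Matrix V V ℝ)
    (hM : M = Matrix.of fun x y => if x ∈ F then 0 else walkMatrix adj x y) :
    pprSeries adj α s t / εr ≤ ∑ w ∈ F, ∑' i : ℕ, (1 - α) ^ i * (M ^ i) s w := by
  obtain rfl : M = killedWalkMatrix adj F := hM
  have hπF : ∀ w ∈ F, pprSeries adj α w t ≤ εr := fun w hw => by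
    rw [hF, Finset.mem_filter] at hw
    exact hw.2.1
  have ht : εr < pprSeries adj α t t := hεrα.trans_le (le_pprSeries_self adj hα₀ hα₁ t)
  rw [div_le_iff₀ hεr₀, pprSeries_eq_sum_mul_pprSeries adj hα₀ hα₁
    (killedWalkMatrix_pow_apply_eq_zero hF ht hs) fun htF => (hπF t htF).not_gt ht, Finset.sum_mul]
  gcongr with w hw
  · exact tsum_nonneg fun i => mul_nonneg (pow_nonneg (sub_nonneg.mpr hα₁.le) i)
      (pow_apply_nonneg (killedWalkMatrix_nonneg adj F) i s w)
  · exact hπF w hw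

/-- if `ε_r < α` and `s ∉ T_t(ε_r)`, the probability that a geometric-length
random walk from `s` hits the frontier set `F_t(ε_r)` is at least `π_s(t)/ε_r`.  Here the
hitting probability is `∑_{w ∈ F} ∑_{i ≥ 0} (1-α)^i (M^i)(s,w)`, where `M` is the walk
matrix with the rows of `F` zeroed out, so `(M^i)(s,w)` is the probability of first hitting
`F` at node `w` at step `i`. -/
theorem walk_hits_frontier_with_prob
    (adj : V → V → Bool) (hdeg : ∀ u : V, 0 < outDeg adj u)
    (α : ℝ) (hα₀ : 0 < α) (hα₁ : α < 1)
    (εr : ℝ) (hεr₀ : 0 < εr) (hεrα : εr < α)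
    (s t : V) (hs : pprSeries adj α s t ≤ εr)
    (F : Finset V)
    (hF : F = Finset.univ.filter (fun w =>
        pprSeries adj α w t ≤ εr ∧ ∃ v : V, adj w v ∧ εr < pprSeries adj α v t))
    (M : Matrix V V ℝ)
    (hM : M = Matrix.of fun x y => if x ∈ F then 0 else walkMatrix adj x y) :
    pprSeries adj α s t / εr ≤ ∑ w ∈ F, ∑' i : ℕ, (1 - α) ^ i * (M ^ i) s w :=
  walk_hits_frontier_with_prob_general adj α hα₀ hα₁ εr hεr₀ hεrα s t hs F hF M hM
end

section
/- Let X_1, …, X_k be i.i.d. random variables with values in [0, ε_r] and E[X_i] = π, where k = c·ε_r/δ for c = max(48·8e·ln(100), 4·log₂(100)). Let π̂ = (1/k)∑ X_i. Then P[|π̂ − π| > max(δ, π)/4] ≤ 0.01. -/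
/-!
Chebyshev's inequality already suffices, without the Chernoff bounds of the paper. A variable with
values in `[0, ε]` and mean `π` has variance at most `ε π`, so by pairwise independence the
empirical mean of `k = c ε / δ` samples has variance at most `ε π / k = δ π / c`. Hence a
deviation of `max(δ, π) / 4` has probability at most `16 δ π / (c max(δ, π)²) ≤ 16 / c`,
and `c ≥ 48 · 8 · e · ln 100 ≥ 48 · 8 · 2 · 4 > 1600`.
-/

open MeasureTheory ProbabilityTheory

namespace ProbabilityTheory

variable {Ω ι : Type*} [MeasurableSpace Ω] {μ : Measure Ω} [IsProbabilityMeasure μ]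

lemma variance_le_mul_integral_of_mem_Icc {Y : Ω → ℝ} {b : ℝ} (hY : AEMeasurable Y μ)
    (hrange : ∀ᵐ ω ∂μ, Y ω ∈ Set.Icc 0 b) : variance Y μ ≤ b * μ[Y] := by
  have hmean : 0 ≤ μ[Y] := integral_nonneg_of_ae (hrange.mono fun _ h => h.1)
  calc variance Y μ ≤ (b - μ[Y]) * (μ[Y] - 0) := variance_le_sub_mul_sub hrange hY
    _ ≤ b * μ[Y] := by nlinarith

variable [Fintype ι] {X : ι → Ω → ℝ} {b m : ℝ}

lemma variance_sum_le_of_mem_Icc (hmeas : ∀ i, AEMeasurable (X i) μ)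
    (hrange : ∀ i, ∀ᵐ ω ∂μ, X i ω ∈ Set.Icc 0 b)
    (hindep : Pairwise fun i j => X i ⟂ᵢ[μ] X j) (hmean : ∀ i, μ[X i] = m) :
    variance (∑ i, X i) μ ≤ Fintype.card ι * (b * m) := by
  have hL2 i : MemLp (X i) 2 μ := memLp_of_bounded (hrange i) (hmeas i).aestronglyMeasurable 2
  rw [IndepFun.variance_sum (fun i _ => hL2 i) fun i _ j _ hij => hindep hij]
  calc ∑ i, variance (X i) μ ≤ ∑ _i : ι, b * m := Finset.sum_le_sum fun i _ =>
        hmean i ▸ variance_le_mul_integral_of_mem_Icc (hmeas i) (hrange i)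
    _ = Fintype.card ι * (b * m) := by simp

lemma measure_lt_abs_sampleMean_sub_le [Nonempty ι] (hmeas : ∀ i, AEMeasurable (X i) μ)
    (hrange : ∀ i, ∀ᵐ ω ∂μ, X i ω ∈ Set.Icc 0 b)
    (hindep : Pairwise fun i j => X i ⟂ᵢ[μ] X j) (hmean : ∀ i, μ[X i] = m) {t : ℝ} (ht : 0 < t) :
    μ {ω | t < |(1 / (Fintype.card ι : ℝ)) * ∑ i, X i ω - m|}
      ≤ ENNReal.ofReal (b * m / (Fintype.card ι * t ^ 2)) := by
  set n : ℝ := (Fintype.card ι : ℝ)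
  have hn : 0 < n := Nat.cast_pos.mpr Fintype.card_pos
  have hL2 i : MemLp (X i) 2 μ := memLp_of_bounded (hrange i) (hmeas i).aestronglyMeasurable 2
  have hL2_sum : MemLp (∑ i, X i) 2 μ := memLp_finsetSum' _ fun i _ => hL2 i
  have hmean_sum : μ[∑ i, X i] = n * m := by
    simp only [Finset.sum_apply]
    rw [integral_finsetSum _ fun i _ => (hL2 i).integrable one_le_two]
    simp [hmean, n]
  have hevent : {ω | t < |1 / n * ∑ i, X i ω - m|}
      ⊆ {ω | n * t ≤ |(∑ i, X i) ω - μ[∑ i, X i]|} := by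
    intro ω hω
    have hrescale : 1 / n * ∑ i, X i ω - m = (∑ i, X i ω - n * m) / n := by field_simp
    rw [Set.mem_ofPred_eq, hrescale, abs_div, abs_of_pos hn, lt_div_iff₀ hn] at hω
    rw [Set.mem_ofPred_eq, hmean_sum, Finset.sum_apply]
    linarith
  calc μ {ω | t < |1 / n * ∑ i, X i ω - m|}
      ≤ ENNReal.ofReal (variance (∑ i, X i) μ / (n * t) ^ 2) :=
        (measure_mono hevent).trans (meas_ge_le_variance_div_sq hL2_sum (by positivity))
    _ ≤ ENNReal.ofReal (n * (b * m) / (n * t) ^ 2) := by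
        gcongr; exact variance_sum_le_of_mem_Icc hmeas hrange hindep hmean
    _ = ENNReal.ofReal (b * m / (n * t ^ 2)) := by congr 1; field_simp

end ProbabilityTheory

lemma fastppr_constant_ge_1600 :
    (1600 : ℝ) ≤ max (48 * 8 * Real.exp 1 * Real.log 100) (4 * Real.logb 2 100) := by
  have he : 2 ≤ Real.exp 1 := by linarith [Real.add_one_le_exp (1 : ℝ)]
  have hlog : 4 ≤ Real.log 100 := by
    rw [Real.le_log_iff_exp_le (by norm_num), show (4 : ℝ) = (4 : ℕ) by norm_num, ← Real.exp_one_pow]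
    calc Real.exp 1 ^ 4 ≤ 2.7182818286 ^ 4 := by
          gcongr; exact Real.exp_one_lt_d9.le
      _ ≤ 100 := by norm_num
  refine le_trans ?_ (le_max_left _ _)
  nlinarith

lemma mul_le_max_sq {a b : ℝ} (ha : 0 ≤ a) : a * b ≤ max a b ^ 2 := by
  rcases le_total b a with h | h
  · rw [max_eq_left h]; nlinarith
  · rw [max_eq_right h]; nlinarith

theorem fastppr_accuracy_general
    {Ω : Type*} [MeasurableSpace Ω] (μ : Measure Ω) [IsProbabilityMeasure μ]
    (δ εr : ℝ) (hδ : 0 < δ) (hεr : 0 < εr)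
    (c : ℝ) (hc : c = max (48 * 8 * Real.exp 1 * Real.log 100) (4 * Real.logb 2 100))
    (k : ℕ) (hk : (k : ℝ) = c * εr / δ)
    (X : Fin k → Ω → ℝ)
    (hmeas : ∀ i, Measurable (X i))
    (hrange : ∀ i ω, X i ω ∈ Set.Icc (0 : ℝ) εr)
    (hindep : iIndepFun X μ)
    (π : ℝ) (hmean : ∀ i, ∫ ω, X i ω ∂μ = π) :
    μ {ω | max δ π / 4 < |(1 / (k : ℝ)) * (∑ i, X i ω) - π|} ≤ ENNReal.ofReal 0.01 := by
  have hc1600 : 1600 ≤ c := hc ▸ fastppr_constant_ge_1600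
  have hk_pos : 0 < k := by exact_mod_cast (show (0 : ℝ) < k by rw [hk]; positivity)
  have : Nonempty (Fin k) := ⟨⟨0, hk_pos⟩⟩
  have hM : 0 < max δ π := lt_max_of_lt_left hδ
  have hchebyshev := measure_lt_abs_sampleMean_sub_le (fun i => (hmeas i).aemeasurable)
    (fun i => ae_of_all μ (hrange i)) (fun i j hij => hindep.indepFun hij) hmean
    (t := max δ π / 4) (by positivity)
  rw [Fintype.card_fin] at hchebyshev
  refine hchebyshev.trans (ENNReal.ofReal_le_ofReal ?_)
  calc εr * π / (k * (max δ π / 4) ^ 2) = 16 / c * (δ * π / max δ π ^ 2) := by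
        rw [hk]; field_simp; norm_num
    _ ≤ 16 / c :=
        mul_le_of_le_one_right (by positivity) ((div_le_one (by positivity)).mpr (mul_le_max_sq hδ.le))
    _ ≤ 0.01 := by rw [div_le_iff₀ (by positivity)]; linarith

/-- abstract FAST-PPR accuracy theorem.  Let `X_1, …, X_k` be i.i.d. random
variables with values in `[0, ε_r]` and mean `π`, where `k = c ε_r / δ` with
`c = max (48·8e·ln 100) (4·log₂ 100)`.  Then the empirical mean `π̂ = (1/k) ∑ X_i`
satisfies `P[|π̂ − π| > max(δ, π)/4] ≤ 0.01`. -/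
theorem fastppr_accuracy
    {Ω : Type*} [MeasurableSpace Ω] (μ : Measure Ω) [IsProbabilityMeasure μ]
    (δ εr : ℝ) (hδ : 0 < δ) (hεr : 0 < εr)
    (c : ℝ) (hc : c = max (48 * 8 * Real.exp 1 * Real.log 100) (4 * Real.logb 2 100))
    (k : ℕ) (hk : (k : ℝ) = c * εr / δ)
    (X : Fin k → Ω → ℝ)
    (hmeas : ∀ i, Measurable (X i))
    (hrange : ∀ i ω, X i ω ∈ Set.Icc (0 : ℝ) εr)
    (hindep : iIndepFun X μ)
    (hident : ∀ i j, Measure.map (X i) μ = Measure.map (X j) μ)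
    (π : ℝ) (hmean : ∀ i, ∫ ω, X i ω ∂μ = π) :
    μ {ω | max δ π / 4 < |(1 / (k : ℝ)) * (∑ i, X i ω) - π|} ≤ ENNReal.ofReal 0.01 :=
  fastppr_accuracy_general μ δ εr hδ hεr c hc k hk X hmeas hrange hindep π hmean
end
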